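/- Let σ : ℝ → ℝ, let u : ℝ × ℝ → ℝ and fix a point (s, t). Assume that the function x ↦ u(x, t) is differentiable on a neighborhood of s with second derivative u_ss(s,t) at s, and that the function r ↦ u(s, r) is differentiable at t with derivative u_t(s,t). Then the T-shape finite difference quotient (u(s,t) − u(s, t − dt))/dt + (σ(t)²/2)·s²·(u(s + ds, t) − 2·u(s,t) + u(s − ds, t))/ds² converges to 𝓛u(s,t) = u_t(s,t) + (σ(t)²/2)·s²·u_ss(s,t) as (dt, ds) → (0⁺, 0⁺) (limit along the product of the filters of positive numbers tending to 0). -/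

import Mathlib

/-!
The time part is the backward difference quotient, which tends to `u_t`. For the space part,
`g h = v (s + h) - 2 v s + v (s - h)` and `h ^ 2` both vanish at `0`, and the ratio of their
derivatives is the symmetric difference quotient `(v' (s + h) - v' (s - h)) / (2 h)` of `v'`,
which tends to `v''(s)`; L'Hôpital's rule then gives the limit of the central second difference.
-/

open Filter Topology

namespace HasDerivAt

variable {f : ℝ → ℝ} {f' x : ℝ}

theorem tendsto_forward_diff_quotient (h : HasDerivAt f f' x) :
    Tendsto (fun d => (f (x + d) - f x) / d) (𝓝[>] 0) (𝓝 f') := by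
  simpa only [smul_eq_mul, inv_mul_eq_div] using h.tendsto_slope_zero_right

theorem tendsto_backward_diff_quotient (h : HasDerivAt f f' x) :
    Tendsto (fun d => (f x - f (x - d)) / d) (𝓝[>] 0) (𝓝 f') := by
  have hneg : Tendsto (Neg.neg : ℝ → ℝ) (𝓝[>] 0) (𝓝[<] 0) := by
    simpa using tendsto_neg_nhdsGT_neg (a := (0 : ℝ))
  refine (h.tendsto_slope_zero_left.comp hneg).congr fun d => ?_
  simp only [Function.comp_apply, smul_eq_mul, ← sub_eq_add_neg, inv_mul_eq_div, div_neg,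
    ← neg_div, neg_sub]

theorem tendsto_symmetric_diff_quotient (h : HasDerivAt f f' x) :
    Tendsto (fun d => (f (x + d) - f (x - d)) / (2 * d)) (𝓝[>] 0) (𝓝 f') := by
  have hmean := (h.tendsto_forward_diff_quotient.add h.tendsto_backward_diff_quotient).div_const 2
  rw [add_self_div_two] at hmean
  refine hmean.congr' ?_
  filter_upwards [self_mem_nhdsWithin] with d (hd : 0 < d)
  field_simp
  ring

end HasDerivAt

theorem tendsto_central_second_diff_quotient {v v' : ℝ → ℝ} {s v'' : ℝ}
    (hv : ∀ᶠ x in 𝓝 s, HasDerivAt v (v' x) x) (hv' : HasDerivAt v' v'' s) :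
    Tendsto (fun h => (v (s + h) - 2 * v s + v (s - h)) / h ^ 2) (𝓝[>] 0) (𝓝 v'') := by
  have hshift : ∀ᶠ h in 𝓝 (0 : ℝ),
      HasDerivAt v (v' (s + h)) (s + h) ∧ HasDerivAt v (v' (s - h)) (s - h) :=
    (((continuous_const.add continuous_id).tendsto' 0 s (add_zero s)).eventually hv).and
      (((continuous_const.sub continuous_id).tendsto' 0 s (sub_zero s)).eventually hv)
  have hderiv : ∀ᶠ h in 𝓝 (0 : ℝ), HasDerivAt (fun h => v (s + h) - 2 * v s + v (s - h))
      (v' (s + h) - v' (s - h)) h := by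
    filter_upwards [hshift] with h ⟨hplus, hminus⟩
    exact (((hplus.comp h ((hasDerivAt_id h).const_add s)).sub_const (2 * v s)).add
      (hminus.comp h ((hasDerivAt_id h).const_sub s))).congr_deriv (by ring)
  have hnum : Tendsto (fun h => v (s + h) - 2 * v s + v (s - h)) (𝓝[>] 0) (𝓝 0) := by
    simpa [two_mul] using
      tendsto_nhdsWithin_of_tendsto_nhds hderiv.self_of_nhds.continuousAt.tendsto
  have hden : Tendsto (fun h : ℝ => h ^ 2) (𝓝[>] 0) (𝓝 0) := by
    simpa using tendsto_nhdsWithin_of_tendsto_nhds ((continuous_pow 2).tendsto (0 : ℝ))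
  refine HasDerivAt.lhopital_zero_nhdsGT (nhdsWithin_le_nhds hderiv)
    (Eventually.of_forall fun h => by simpa using hasDerivAt_pow 2 h) ?_ hnum hden
    hv'.tendsto_symmetric_diff_quotient
  filter_upwards [self_mem_nhdsWithin] with h (hh : 0 < h)
  positivity

/-- Consistency of the T-shape finite difference scheme: if `x ↦ u(x,t)` is differentiable
near `s` (with derivative function `us`) and `us` has derivative `uss` at `s` (the second
space derivative), and `r ↦ u(s,r)` has derivative `ut` at `t`, then the T-shape difference
quotient converges to `𝓛u(s,t) = u_t + (σ(t)²/2) s² u_ss` as `(dt, ds) → (0⁺, 0⁺)`. -/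
theorem tshape_scheme_consistency
    (σ : ℝ → ℝ) (u : ℝ × ℝ → ℝ) (s t : ℝ)
    (us : ℝ → ℝ) (ut uss : ℝ)
    (hus : ∀ᶠ x in 𝓝 s, HasDerivAt (fun y => u (y, t)) (us x) x)
    (huss : HasDerivAt us uss s)
    (hut : HasDerivAt (fun r => u (s, r)) ut t) :
    Tendsto
      (fun p : ℝ × ℝ =>
        (u (s, t) - u (s, t - p.1)) / p.1
          + σ t ^ 2 / 2 * s ^ 2
            * ((u (s + p.2, t) - 2 * u (s, t) + u (s - p.2, t)) / p.2 ^ 2))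
      ((𝓝[>] (0 : ℝ)) ×ˢ (𝓝[>] (0 : ℝ)))
      (𝓝 (ut + σ t ^ 2 / 2 * s ^ 2 * uss)) :=
  (hut.tendsto_backward_diff_quotient.comp tendsto_fst).add
    (((tendsto_central_second_diff_quotient hus huss).comp tendsto_snd).const_mul _)
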